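/- arXiv:2004.01249 — 2 statements merged into one kernel-verified Lean document; each statement's English description precedes it below -/
import Mathlib

section
/- (Fisher consistency of the MDPDE functional.) Assume (A1) (common support set C for all p_ij(θ)), that the family F is identifiable, and that θ0 ∈ Θ with stationary probabilities π_io > 0 of P(θ0) for all i. Then for every α ≥ 0, θ0 is the unique minimizer over θ ∈ Θ of the weighted density power divergence Σ_{i=1}^{K} π_io d_α(P_i(θ0), P_i(θ)), where P_i(θ) denotes the i-th row of P(θ); that is, the MDPDE functional satisfies F_α(P(θ0)) = θ0. -/
open Finset

/-- The density power divergence between two probability vectors on `Fin m`: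
for `α > 0` it is `∑_j [f_j^{1+α} − (1+1/α) f_j^α g_j + (1/α) g_j^{1+α}]`, and
for `α = 0` it is the Kullback–Leibler divergence `∑_j g_j log(g_j/f_j)`
(with the convention `0·log 0 = 0`). -/
noncomputable def dpd (α : ℝ) {m : ℕ} (g f : Fin m → ℝ) : ℝ :=
  if α = 0 then ∑ j, g j * Real.log (g j / f j)
  else ∑ j, (f j ^ (1 + α) - (1 + 1 / α) * f j ^ α * g j + (1 / α) * g j ^ (1 + α))

private lemma dpd_term_pos {α f g : ℝ} (hα : 0 < α) (hf : 0 ≤ f) (hg : 0 ≤ g)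
    (hne : f ≠ g) :
    0 < f ^ (1 + α) - (1 + 1 / α) * f ^ α * g + (1 / α) * g ^ (1 + α) := by
  have h1α : (0:ℝ) < 1 + α := by linarith
  rcases hg.eq_or_lt with hg0 | hgpos
  · -- g = 0
    subst hg0
    have hfpos : 0 < f := lt_of_le_of_ne hf (Ne.symm (by simpa using hne))
    rw [Real.zero_rpow h1α.ne']
    have := Real.rpow_pos_of_pos hfpos (1 + α)
    simp only [mul_zero]
    linarith
  rcases hf.eq_or_lt with hf0 | hfpos
  · -- f = 0
    subst hf0
    rw [Real.zero_rpow h1α.ne', Real.zero_rpow hα.ne']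
    have := Real.rpow_pos_of_pos hgpos (1 + α)
    have h1 : 0 < 1/α := by positivity
    nlinarith
  -- f, g > 0
  have hab : α / (1 + α) + 1 / (1 + α) = 1 := by field_simp; ring
  have ha : (0:ℝ) < α / (1 + α) := by positivity
  have hb : (0:ℝ) < 1 / (1 + α) := by positivity
  have hxy : (1 + α) * Real.log f ≠ (1 + α) * Real.log g := by
    intro h
    apply hne
    have := mul_left_cancel₀ h1α.ne' h
    exact Real.log_injOn_pos (Set.mem_Ioi.mpr hfpos) (Set.mem_Ioi.mpr hgpos) this
  have key := strictConvexOn_exp.2 (Set.mem_univ ((1 + α) * Real.log f))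
    (Set.mem_univ ((1 + α) * Real.log g)) hxy ha hb hab
  simp only [smul_eq_mul] at key
  have e1 : Real.exp ((1 + α) * Real.log f) = f ^ (1 + α) := by
    rw [Real.rpow_def_of_pos hfpos, mul_comm]
  have e2 : Real.exp ((1 + α) * Real.log g) = g ^ (1 + α) := by
    rw [Real.rpow_def_of_pos hgpos, mul_comm]
  have e3 : α / (1 + α) * ((1 + α) * Real.log f) + 1 / (1 + α) * ((1 + α) * Real.log g)
      = α * Real.log f + Real.log g := by field_simp
  rw [e3] at key
  have e4 : Real.exp (α * Real.log f + Real.log g) = f ^ α * g := by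
    rw [Real.exp_add, Real.exp_log hgpos, Real.rpow_def_of_pos hfpos, mul_comm α]
  rw [e4, e1, e2] at key
  -- key : f ^ α * g < α/(1+α) * f^(1+α) + 1/(1+α) * g^(1+α)
  have := mul_lt_mul_of_pos_left key (show (0:ℝ) < (1 + α)/α by positivity)
  have hA : (1 + α)/α * (α / (1 + α) * f ^ (1+α) + 1 / (1 + α) * g ^ (1+α))
      = f ^ (1+α) + (1/α) * g ^ (1+α) := by field_simp
  have hB : (1 + α)/α * (f ^ α * g) = (1 + 1/α) * f ^ α * g := by field_simp; ring
  rw [hA, hB] at this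
  linarith

private lemma dpd_term_nonneg {α f g : ℝ} (hα : 0 < α) (hf : 0 ≤ f) (hg : 0 ≤ g) :
    0 ≤ f ^ (1 + α) - (1 + 1 / α) * f ^ α * g + (1 / α) * g ^ (1 + α) := by
  rcases eq_or_ne f g with rfl | hne
  · rcases hf.eq_or_lt with hf0 | hfpos
    · subst hf0
      rw [Real.zero_rpow (by linarith : (1:ℝ) + α ≠ 0)]
      simp
    · have : f ^ α * f = f ^ (1 + α) := by
        rw [add_comm, Real.rpow_add_one hfpos.ne']
      have hα' : (1:ℝ) + 1/α = (1 + α)/α := by field_simp; ring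
      rw [show (1 + 1/α) * f ^ α * f = (1 + 1/α) * (f ^ α * f) by ring, this]
      field_simp
      ring_nf
      nlinarith [Real.rpow_pos_of_pos hfpos (1+α)]
  · exact (dpd_term_pos hα hf hg hne).le

private lemma kl_term_le {g f : ℝ} (hg : 0 ≤ g) (hf : 0 ≤ f) (hsup : 0 < g → 0 < f) :
    g - f ≤ g * Real.log (g / f) := by
  rcases hg.eq_or_lt with hg0 | hgpos
  · subst hg0; simpa using hf
  · have hfpos := hsup hgpos
    have h := Real.log_le_sub_one_of_pos (div_pos hfpos hgpos)
    have hlog : Real.log (g / f) = -(Real.log (f / g)) := by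
      rw [← Real.log_inv]; congr 1; field_simp
    rw [hlog]
    have : f / g - 1 = (f - g)/g := by field_simp
    rw [this] at h
    have := mul_le_mul_of_nonneg_left h hg
    calc g - f = g * (-((f - g)/g)) := by field_simp; ring
    _ ≤ g * (-(Real.log (f/g))) := by nlinarith
    _ = g * -Real.log (f/g) := rfl

private lemma kl_term_eq {g f : ℝ} (hgpos : 0 < g) (hfpos : 0 < f)
    (h : g * Real.log (g / f) = g - f) : f = g := by
  by_contra hne
  have hx : f / g ≠ 1 := by
    intro h1
    exact hne (by field_simp at h1; linarith)
  have hlt := Real.log_lt_sub_one_of_pos (div_pos hfpos hgpos) hx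
  have e : Real.log (g / f) = -(Real.log (f / g)) := by
    rw [← Real.log_inv, inv_div]
  rw [e] at h
  have h2 : f / g - 1 = (f - g) / g := by field_simp
  rw [h2] at hlt
  have h3 := mul_lt_mul_of_pos_left hlt hgpos
  have h4 : g * ((f - g) / g) = f - g := by field_simp
  rw [h4] at h3
  nlinarith

private lemma dpd_self {m : ℕ} (α : ℝ) (hα : 0 ≤ α) (g : Fin m → ℝ)
    (hg : ∀ j, 0 ≤ g j) : dpd α g g = 0 := by
  unfold dpd
  rcases eq_or_ne α 0 with rfl | hα0
  · simp only [if_pos rfl, if_true]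
    apply Finset.sum_eq_zero
    intro j _
    rcases (hg j).eq_or_lt with h0 | hpos
    · rw [← h0]; ring
    · rw [div_self hpos.ne', Real.log_one, mul_zero]
  · have hαpos : 0 < α := lt_of_le_of_ne hα (Ne.symm hα0)
    simp only [if_neg hα0]
    apply Finset.sum_eq_zero
    intro j _
    rcases (hg j).eq_or_lt with h0 | hpos
    · rw [← h0, Real.zero_rpow (by linarith : (1:ℝ) + α ≠ 0)]
      ring
    · have h1 : g j ^ α * g j = g j ^ (1 + α) := by
        rw [add_comm, Real.rpow_add_one hpos.ne']
      rw [show (1 + 1/α) * g j ^ α * g j = (1 + 1/α) * (g j ^ α * g j) by ring, h1]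
      field_simp
      ring

private lemma dpd_nonneg {m : ℕ} (α : ℝ) (hα : 0 ≤ α) (g f : Fin m → ℝ)
    (hg : ∀ j, 0 ≤ g j) (hf : ∀ j, 0 ≤ f j)
    (hgs : ∑ j, g j = 1) (hfs : ∑ j, f j = 1)
    (hsup : ∀ j, 0 < g j → 0 < f j) : 0 ≤ dpd α g f := by
  unfold dpd
  rcases eq_or_ne α 0 with rfl | hα0
  · simp only [if_pos rfl, if_true]
    have h1 : ∑ j, (g j - f j) ≤ ∑ j, g j * Real.log (g j / f j) :=
      Finset.sum_le_sum fun j _ => kl_term_le (hg j) (hf j) (hsup j)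
    have h2 : ∑ j, (g j - f j) = 0 := by
      rw [Finset.sum_sub_distrib, hgs, hfs]; ring
    linarith
  · have hαpos : 0 < α := lt_of_le_of_ne hα (Ne.symm hα0)
    simp only [if_neg hα0]
    exact Finset.sum_nonneg fun j _ => dpd_term_nonneg hαpos (hf j) (hg j)

private lemma dpd_eq_zero {m : ℕ} (α : ℝ) (hα : 0 ≤ α) (g f : Fin m → ℝ)
    (hg : ∀ j, 0 ≤ g j) (hf : ∀ j, 0 ≤ f j)
    (hgs : ∑ j, g j = 1) (hfs : ∑ j, f j = 1)
    (hsup : ∀ j, 0 < g j → 0 < f j)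
    (h0 : dpd α g f = 0) : ∀ j, f j = g j := by
  unfold dpd at h0
  rcases eq_or_ne α 0 with rfl | hα0
  · simp only [if_pos rfl, if_true] at h0
    have hterm : ∀ j ∈ Finset.univ, (0:ℝ) ≤ g j * Real.log (g j / f j) - (g j - f j) :=
      fun j _ => sub_nonneg.mpr (kl_term_le (hg j) (hf j) (hsup j))
    have hsum : ∑ j, (g j * Real.log (g j / f j) - (g j - f j)) = 0 := by
      rw [Finset.sum_sub_distrib, h0, Finset.sum_sub_distrib, hgs, hfs]; ring
    have heach := (Finset.sum_eq_zero_iff_of_nonneg hterm).mp hsum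
    intro j
    have hj : g j * Real.log (g j / f j) = g j - f j := by
      have := heach j (Finset.mem_univ j)
      linarith
    rcases (hg j).eq_or_lt with hg0 | hgpos
    · rw [← hg0] at hj ⊢
      simp at hj
      linarith
    · exact kl_term_eq hgpos (hsup j hgpos) hj
  · have hαpos : 0 < α := lt_of_le_of_ne hα (Ne.symm hα0)
    simp only [if_neg hα0] at h0
    have heach := (Finset.sum_eq_zero_iff_of_nonneg
      (fun j _ => dpd_term_nonneg hαpos (hf j) (hg j))).mp h0
    intro j
    by_contra hne
    exact (dpd_term_pos hαpos (hf j) (hg j) hne).ne'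
      (heach j (Finset.mem_univ j))

/-- **Fisher consistency of the MDPDE functional.**  Assume (A1) (the support set
`C` of `p_ij(θ)` is the same for all `θ ∈ Θ`), identifiability of the family, and
let `θ0 ∈ Θ` have stationary probabilities `π_io > 0` of `P(θ0)`.  Then for every
`α ≥ 0`, `θ0` is the unique minimizer over `θ ∈ Θ` of the weighted density power
divergence `∑_i π_io d_α(P_i(θ0), P_i(θ))`, i.e. `F_α(P(θ0)) = θ0`. -/
theorem mdpde_fisher_consistency {d K : ℕ}
    (Θ : Set (Fin d → ℝ)) (p : (Fin d → ℝ) → Fin K → Fin K → ℝ)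
    (hrow : ∀ θ ∈ Θ, ∀ i, (∀ j, 0 ≤ p θ i j) ∧ ∑ j, p θ i j = 1)
    (hident : ∀ θ₁ ∈ Θ, ∀ θ₂ ∈ Θ, (∀ i j, p θ₁ i j = p θ₂ i j) → θ₁ = θ₂)
    (hA1 : ∀ θ₁ ∈ Θ, ∀ θ₂ ∈ Θ, ∀ i j, (0 < p θ₁ i j ↔ 0 < p θ₂ i j))
    (θ0 : Fin d → ℝ) (hθ0 : θ0 ∈ Θ)
    (π : Fin K → ℝ) (hπpos : ∀ i, 0 < π i) (hπsum : ∑ i, π i = 1)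
    (hπstat : ∀ j, ∑ i, π i * p θ0 i j = π j) :
    ∀ α : ℝ, 0 ≤ α →
      (∀ θ ∈ Θ,
          ∑ i, π i * dpd α (fun j => p θ0 i j) (fun j => p θ0 i j) ≤
            ∑ i, π i * dpd α (fun j => p θ0 i j) (fun j => p θ i j)) ∧
      (∀ θ ∈ Θ,
          ∑ i, π i * dpd α (fun j => p θ0 i j) (fun j => p θ i j) =
            ∑ i, π i * dpd α (fun j => p θ0 i j) (fun j => p θ0 i j) →
          θ = θ0) := by
  intro α hα
  have hLHS : ∀ i : Fin K, dpd α (fun j => p θ0 i j) (fun j => p θ0 i j) = 0 :=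
    fun i => dpd_self α hα _ (fun j => (hrow θ0 hθ0 i).1 j)
  have hD : ∀ θ ∈ Θ, ∀ i : Fin K,
      0 ≤ dpd α (fun j => p θ0 i j) (fun j => p θ i j) := by
    intro θ hθ i
    exact dpd_nonneg α hα _ _ (fun j => (hrow θ0 hθ0 i).1 j)
      (fun j => (hrow θ hθ i).1 j) ((hrow θ0 hθ0 i).2) ((hrow θ hθ i).2)
      (fun j => (hA1 θ0 hθ0 θ hθ i j).mp)
  constructor
  · intro θ hθ
    have h1 : ∑ i, π i * dpd α (fun j => p θ0 i j) (fun j => p θ0 i j) = 0 := by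
      apply Finset.sum_eq_zero
      intro i _
      rw [hLHS i, mul_zero]
    rw [h1]
    exact Finset.sum_nonneg fun i _ => mul_nonneg (hπpos i).le (hD θ hθ i)
  · intro θ hθ heq
    have h1 : ∑ i, π i * dpd α (fun j => p θ0 i j) (fun j => p θ0 i j) = 0 := by
      apply Finset.sum_eq_zero
      intro i _
      rw [hLHS i, mul_zero]
    rw [h1] at heq
    have heach := (Finset.sum_eq_zero_iff_of_nonneg
      (fun i _ => mul_nonneg (hπpos i).le (hD θ hθ i))).mp heq
    have hDzero : ∀ i, dpd α (fun j => p θ0 i j) (fun j => p θ i j) = 0 := by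
      intro i
      have := heach i (Finset.mem_univ i)
      rcases mul_eq_zero.mp this with h | h
      · exact absurd h (hπpos i).ne'
      · exact h
    refine hident θ hθ θ0 hθ0 (fun i j => ?_)
    exact dpd_eq_zero α hα _ _ (fun j => (hrow θ0 hθ0 i).1 j)
      (fun j => (hrow θ hθ i).1 j) ((hrow θ0 hθ0 i).2) ((hrow θ hθ i).2)
      (fun j => (hA1 θ0 hθ0 θ hθ i j).mp) (hDzero i) j
end

section
/- (Influence function of the Wald-type test functional: the first-order influence function vanishes and the second-order influence function is a quadratic form in the estimator's influence function.) Let h : Θ ⊆ R^d → R^r be twice continuously differentiable with Jacobian transpose H(θ) (a d×r matrix), let θ : (−δ, δ) → Θ be twice differentiable with h(θ(0)) = 0_r, and let A : (−δ, δ) → R^{r×r} be twice differentiable with A(0) = Σ*^{−1}, where Σ* = H(θ(0))ᵀ Σ H(θ(0)) is nonsingular for a fixed d×d matrix Σ. Define W(ε) = h(θ(ε))ᵀ A(ε) h(θ(ε)). Then W'(0) = 0 and W''(0) = 2 θ'(0)ᵀ H(θ(0)) Σ*^{−1} H(θ(0))ᵀ θ'(0). In particular, for the Wald-type test functional W_α(Π_ε)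 = h(F_α(Π_ε))ᵀ Σ_α*(F_α(Π_ε))^{−1} h(F_α(Π_ε)) along a contamination path Π_ε with h(F_α(Π_0)) = 0, the first-order influence function IF(t; W_α, Π_0) is identically zero and the second-order influence function equals IF_2(t; W_α, Π_0) = 2 · IF(t; F_α, Π_0)ᵀ H(θ_0) Σ_α*(θ_0)^{−1} H(θ_0)ᵀ IF(t; F_α, Π_0), where θ_0 = F_α(Π_0) and IF(t; F_α, Π_0) = (d/dε) F_α(Π_ε)|_{ε=0}. -/
open Matrix

/-- **Influence function of the Wald-type test functional:** the first-order
influence function vanishes and the second-order influence function is a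
quadratic form in the estimator's influence function.  Along a (contamination)
path `ε ↦ θ(ε)` with `h(θ(0)) = 0`, and a twice differentiable matrix path
`A(ε)` with `A(0) = Σ*⁻¹` where `Σ* = H(θ(0))ᵀ Σ H(θ(0))` is nonsingular, the
Wald-type functional `W(ε) = h(θ(ε))ᵀ A(ε) h(θ(ε))` satisfies `W'(0) = 0` and
`W''(0) = 2 θ'(0)ᵀ H(θ(0)) Σ*⁻¹ H(θ(0))ᵀ θ'(0)`.  In particular, taking
`θ(ε) = F_α(Π_ε)` (the MDPDE functional along `Π_ε = (1−ε)Π_0 + εD_t`) and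
`A(ε) = Σ_α*(F_α(Π_ε))⁻¹`, the first-order influence function `IF(t; W_α, Π_0)`
is identically zero and
`IF₂(t; W_α, Π_0) = 2·IF(t;F_α,Π_0)ᵀ H(θ_0) Σ_α*(θ_0)⁻¹ H(θ_0)ᵀ IF(t;F_α,Π_0)`,
with `IF(t;F_α,Π_0) = θ'(0)`. -/
theorem wald_test_influence_function {d r : ℕ}
    (h : (Fin d → ℝ) → (Fin r → ℝ))
    (H : (Fin d → ℝ) → Matrix (Fin d) (Fin r) ℝ)
    (θpath : ℝ → (Fin d → ℝ))
    (A : ℝ → Matrix (Fin r) (Fin r) ℝ)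
    (Sig : Matrix (Fin d) (Fin d) ℝ)
    (δ : ℝ) (hδ : 0 < δ)
    (hh : ContDiff ℝ 2 h)
    (hH : ∀ x : Fin d → ℝ,
      HasFDerivAt h (LinearMap.toContinuousLinearMap (Matrix.mulVecLin (H x)ᵀ)) x)
    (hθ : ContDiffOn ℝ 2 θpath (Set.Ioo (-δ) δ))
    (hA : ∀ i j, ContDiffOn ℝ 2 (fun ε => A ε i j) (Set.Ioo (-δ) δ))
    (hnull : h (θpath 0) = 0)
    (hSig : IsUnit ((H (θpath 0))ᵀ * Sig * H (θpath 0)).det)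
    (hA0 : A 0 = ((H (θpath 0))ᵀ * Sig * H (θpath 0))⁻¹) :
    deriv (fun ε => dotProduct (h (θpath ε)) ((A ε).mulVec (h (θpath ε)))) 0 = 0 ∧
    deriv (deriv (fun ε => dotProduct (h (θpath ε)) ((A ε).mulVec (h (θpath ε))))) 0 =
      2 * dotProduct ((H (θpath 0))ᵀ.mulVec (deriv θpath 0))
        ((((H (θpath 0))ᵀ * Sig * H (θpath 0))⁻¹).mulVec
          ((H (θpath 0))ᵀ.mulVec (deriv θpath 0))) := by
  have hu : IsOpen (Set.Ioo (-δ) δ) := isOpen_Ioo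
  have h0u : (0:ℝ) ∈ Set.Ioo (-δ) δ := ⟨by linarith, hδ⟩
  have hmem : Set.Ioo (-δ) δ ∈ nhds (0:ℝ) := hu.mem_nhds h0u
  have hgC : ContDiffOn ℝ 2 (fun ε => h (θpath ε)) (Set.Ioo (-δ) δ) :=
    hh.comp_contDiffOn hθ
  have hgiC : ∀ i, ContDiffOn ℝ 2 (fun ε => h (θpath ε) i) (Set.Ioo (-δ) δ) :=
    fun i => (contDiffOn_pi.mp hgC) i
  -- first derivatives on the open interval
  have hgi1 : ∀ i, ∀ ε ∈ Set.Ioo (-δ) δ,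
      HasDerivAt (fun t => h (θpath t) i) (deriv (fun t => h (θpath t) i) ε) ε :=
    fun i ε hε => (((hgiC i).differentiableOn (by norm_num)).differentiableAt
      (hu.mem_nhds hε)).hasDerivAt
  have hA1 : ∀ i j, ∀ ε ∈ Set.Ioo (-δ) δ,
      HasDerivAt (fun t => A t i j) (deriv (fun t => A t i j) ε) ε :=
    fun i j ε hε => (((hA i j).differentiableOn (by norm_num)).differentiableAt
      (hu.mem_nhds hε)).hasDerivAt
  -- second derivatives at 0
  have hgi2 : ∀ i, HasDerivAt (deriv (fun t => h (θpath t) i))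
      (deriv (deriv (fun t => h (θpath t) i)) 0) 0 :=
    fun i => ((((hgiC i).deriv_of_isOpen (m := 1) hu (by norm_num)).differentiableOn
      (by norm_num)).differentiableAt hmem).hasDerivAt
  have hA2 : ∀ i j, HasDerivAt (deriv (fun t => A t i j))
      (deriv (deriv (fun t => A t i j)) 0) 0 :=
    fun i j => ((((hA i j).deriv_of_isOpen (m := 1) hu (by norm_num)).differentiableOn
      (by norm_num)).differentiableAt hmem).hasDerivAt
  -- first derivative function W1
  set W1 : ℝ → ℝ := fun ε => ∑ i, ∑ j,
    (deriv (fun t => h (θpath t) i) ε * (A ε i j * h (θpath ε) j) +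
      h (θpath ε) i * (deriv (fun t => A t i j) ε * h (θpath ε) j +
        A ε i j * deriv (fun t => h (θpath t) j) ε)) with hW1def
  have hWrw : (fun t => dotProduct (h (θpath t)) ((A t).mulVec (h (θpath t))))
      = fun t => ∑ i, ∑ j, h (θpath t) i * (A t i j * h (θpath t) j) := by
    funext t
    simp [dotProduct, mulVec, Finset.mul_sum]
  have hW : ∀ ε ∈ Set.Ioo (-δ) δ,
      HasDerivAt (fun t => dotProduct (h (θpath t)) ((A t).mulVec (h (θpath t))))
        (W1 ε) ε := by
    intro ε hε
    rw [hWrw, hW1def]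
    exact HasDerivAt.fun_sum fun i _ => HasDerivAt.fun_sum fun j _ =>
      (hgi1 i ε hε).mul ((hA1 i j ε hε).mul (hgi1 j ε hε))
  -- first conclusion
  have hd0 : deriv (fun ε => dotProduct (h (θpath ε)) ((A ε).mulVec (h (θpath ε)))) 0
      = W1 0 := (hW 0 h0u).deriv
  have hW10 : W1 0 = 0 := by
    rw [hW1def]
    simp [hnull]
  -- derivative of θ-composed h at 0
  have hθd : HasDerivAt θpath (deriv θpath 0) 0 :=
    (((hθ.differentiableOn (by norm_num)).differentiableAt hmem)).hasDerivAt
  have hgd0 : HasDerivAt (fun t => h (θpath t))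
      ((H (θpath 0))ᵀ.mulVec (deriv θpath 0)) 0 := by
    have := (hH (θpath 0)).comp_hasDerivAt 0 hθd
    simpa [Function.comp_def, Matrix.mulVec_transpose] using this
  have hvi : ∀ i, deriv (fun t => h (θpath t) i) 0
      = ((H (θpath 0))ᵀ.mulVec (deriv θpath 0)) i :=
    fun i => (hasDerivAt_pi.mp hgd0 i).deriv
  -- second conclusion
  have heq : deriv (fun ε => dotProduct (h (θpath ε)) ((A ε).mulVec (h (θpath ε))))
      =ᶠ[nhds (0:ℝ)] W1 :=
    Filter.eventuallyEq_of_mem hmem (fun ε hε => (hW ε hε).deriv)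
  have hdd : deriv (deriv (fun ε => dotProduct (h (θpath ε)) ((A ε).mulVec (h (θpath ε))))) 0
      = deriv W1 0 := heq.deriv_eq
  have hW1d : HasDerivAt W1 (∑ i, ∑ j,
      ((deriv (deriv (fun t => h (θpath t) i)) 0 * (A 0 i j * h (θpath 0) j) +
        deriv (fun t => h (θpath t) i) 0 * (deriv (fun t => A t i j) 0 * h (θpath 0) j +
          A 0 i j * deriv (fun t => h (θpath t) j) 0)) +
       (deriv (fun t => h (θpath t) i) 0 * (deriv (fun t => A t i j) 0 * h (θpath 0) j +
          A 0 i j * deriv (fun t => h (θpath t) j) 0) +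
        h (θpath 0) i * (deriv (deriv (fun t => A t i j)) 0 * h (θpath 0) j +
          deriv (fun t => A t i j) 0 * deriv (fun t => h (θpath t) j) 0 +
          (deriv (fun t => A t i j) 0 * deriv (fun t => h (θpath t) j) 0 +
            A 0 i j * deriv (deriv (fun t => h (θpath t) j)) 0))))) 0 := by
    rw [hW1def]
    refine HasDerivAt.fun_sum fun i _ => HasDerivAt.fun_sum fun j _ => ?_
    exact ((hgi2 i).mul ((hA1 i j 0 h0u).mul (hgi1 j 0 h0u))).add
      ((hgi1 i 0 h0u).mul (((hA2 i j).mul (hgi1 j 0 h0u)).add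
        ((hA1 i j 0 h0u).mul (hgi2 j))))
  constructor
  · rw [hd0, hW10]
  · rw [hdd, hW1d.deriv]
    have hRHS : 2 * dotProduct ((H (θpath 0))ᵀ.mulVec (deriv θpath 0))
        ((((H (θpath 0))ᵀ * Sig * H (θpath 0))⁻¹).mulVec
          ((H (θpath 0))ᵀ.mulVec (deriv θpath 0)))
        = ∑ i, ∑ j, 2 * (((H (θpath 0))ᵀ.mulVec (deriv θpath 0)) i *
            ((((H (θpath 0))ᵀ * Sig * H (θpath 0))⁻¹) i j *
              ((H (θpath 0))ᵀ.mulVec (deriv θpath 0)) j)) := by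
      simp [dotProduct, mulVec, Finset.mul_sum]
    rw [hRHS]
    refine Finset.sum_congr rfl fun i _ => Finset.sum_congr rfl fun j _ => ?_
    have h0i : h (θpath 0) i = 0 := by rw [hnull]; rfl
    have h0j : h (θpath 0) j = 0 := by rw [hnull]; rfl
    rw [h0i, h0j, hvi i, hvi j, hA0]
    ring
end
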